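/- arXiv:2205.14431 — 3 statements merged into one kernel-verified Lean document; each statement's English description precedes it below -/
import Mathlib

section
/- Let N > 1 be an integer, α > 0, and b = 0. For every fixed r₀ > 0, the derivative of the translating profile at r₀ tends to infinity as the speed tends to infinity: Φ'(r₀; c, 0) → ∞ as c → ∞. -/
open Set Filter Topology

/-- Signed power: the usual real power for nonnegative arguments, extended oddly
to negative arguments (matching `x^{e}` for `1/e = p/q` with `p, q` odd). -/
noncomputable def oddPow (x e : ℝ) : ℝ := if 0 ≤ x then x ^ e else -((-x) ^ e)

/-- `φ`, with first derivative `φ'` and second derivative `φ''`, solves the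
translating-profile equation
`φ''/(1+φ'²) + ((N−1)/r)·φ' = (c/√(1+φ'²) − b)^{1/α}·√(1+φ'²)` for `r ∈ J`, `r ≠ 0`,
with the initial conditions `φ(0) = φ'(0) = 0`. -/
def IsProfileSolOn (N : ℕ) (α b c : ℝ) (J : Set ℝ) (φ φ' φ'' : ℝ → ℝ) : Prop :=
  φ 0 = 0 ∧ φ' 0 = 0 ∧
  (∀ r ∈ J, HasDerivWithinAt φ (φ' r) J r) ∧
  (∀ r ∈ J, HasDerivWithinAt φ' (φ'' r) J r) ∧
  (∀ r ∈ J, r ≠ 0 →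
    φ'' r / (1 + φ' r ^ 2) + (((N : ℝ) - 1) / r) * φ' r
      = oddPow (c / Real.sqrt (1 + φ' r ^ 2) - b) (1 / α) * Real.sqrt (1 + φ' r ^ 2))

/-- `φ` is the unique solution of the translating-profile problem, defined on its
maximal existence interval `[0, R)`: it is a solution there, and any solution on any
interval `[0, S)` satisfies `S ≤ R` and coincides with `φ` on `[0, S)`. -/
def IsMaxProfileSol (N : ℕ) (α b c R : ℝ) (φ φ' φ'' : ℝ → ℝ) : Prop :=
  0 < R ∧ IsProfileSolOn N α b c (Set.Ico 0 R) φ φ' φ'' ∧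
  ∀ S ψ ψ' ψ'', 0 < S → IsProfileSolOn N α b c (Set.Ico 0 S) ψ ψ' ψ'' →
    S ≤ R ∧ Set.EqOn ψ φ (Set.Ico 0 S)

/-! Write `φ' = tan θ`. For `b = 0` the equation is the divergence form
`(r ^ (N - 1) sin θ)' = r ^ (N - 1) (c cos θ) ^ (1 / α) ≥ 0`, so `r ^ (N - 1) sin θ` is
nondecreasing and, vanishing at `0`, nonnegative. If `φ'(r₀) ≤ M`, then `sin θ(r₀)` stays below
`sin θ_M < 1`, and monotonicity keeps `sin θ` uniformly below `1` on an interval `[ρ, r₀]`; there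
`cos θ` is bounded below, and the mean value theorem on `[ρ, r₀]` bounds `c` in terms of `M`
and `r₀` only. -/

lemma oddPow_of_nonneg {x : ℝ} (hx : 0 ≤ x) (e : ℝ) : oddPow x e = x ^ e := if_pos hx

noncomputable def sinOfSlope (v : ℝ) : ℝ := v / √(1 + v ^ 2)

lemma sinOfSlope_eq_tanh_arsinh (v : ℝ) : sinOfSlope v = Real.tanh (Real.arsinh v) :=
  (Real.tanh_arsinh v).symm

@[simp]
lemma sinOfSlope_zero : sinOfSlope 0 = 0 := by simp [sinOfSlope]

lemma sinOfSlope_lt_one (v : ℝ) : sinOfSlope v < 1 := by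
  rw [sinOfSlope_eq_tanh_arsinh]
  exact Real.tanh_lt_one _

lemma monotone_sinOfSlope : Monotone sinOfSlope := by
  intro a b hab
  simp only [sinOfSlope_eq_tanh_arsinh]
  by_contra! h
  have := Real.artanh_lt_artanh (Real.neg_one_lt_tanh _) (Real.tanh_lt_one _) h
  rw [Real.artanh_tanh, Real.artanh_tanh] at this
  exact (Real.arsinh_le_arsinh.2 hab).not_gt this

lemma one_add_sq_mul_one_sub_sinOfSlope_sq (v : ℝ) : (1 + v ^ 2) * (1 - sinOfSlope v ^ 2) = 1 := by
  have h : (0 : ℝ) < 1 + v ^ 2 := by positivity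
  rw [sinOfSlope, div_pow, Real.sq_sqrt h.le]
  field_simp
  ring

lemma one_add_sq_le_of_sinOfSlope_le {v w : ℝ} (h₀ : 0 ≤ sinOfSlope v) (h : sinOfSlope v ≤ w)
    (hw : w < 1) : 1 + v ^ 2 ≤ (1 - w ^ 2)⁻¹ := by
  have hvw : sinOfSlope v ^ 2 ≤ w ^ 2 := pow_le_pow_left₀ h₀ h 2
  have hw₂ : 0 < 1 - w ^ 2 := by nlinarith
  rw [eq_inv_of_mul_eq_one_left (one_add_sq_mul_one_sub_sinOfSlope_sq v)]
  exact inv_anti₀ hw₂ (by linarith)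

lemma hasDerivAt_sinOfSlope (v : ℝ) : HasDerivAt sinOfSlope (((1 + v ^ 2) * √(1 + v ^ 2))⁻¹) v := by
  have h : (0 : ℝ) < 1 + v ^ 2 := by positivity
  have hs := ((hasDerivAt_pow 2 v).const_add 1).sqrt h.ne'
  refine ((hasDerivAt_id' v).fun_div hs (Real.sqrt_pos.2 h).ne').congr_deriv ?_
  have hsq := Real.sq_sqrt h.le
  norm_num
  field_simp
  rw [hsq]
  ring

lemma continuous_sinOfSlope : Continuous sinOfSlope :=
  continuous_iff_continuousAt.2 fun v => (hasDerivAt_sinOfSlope v).continuousAt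

lemma exists_mem_Ioo_mul_pow_lt_pow {w r : ℝ} (hw : w < 1) (hr : 0 < r) (k : ℕ) :
    ∃ ρ ∈ Ioo 0 r, w * r ^ k < ρ ^ k := by
  have hlim : Tendsto (fun ρ : ℝ => ρ ^ k) (𝓝[<] r) (𝓝 (r ^ k)) :=
    ((continuous_pow k).tendsto r).mono_left nhdsWithin_le_nhds
  have hlt : w * r ^ k < r ^ k := mul_lt_of_lt_one_left (pow_pos hr k) hw
  exact (Filter.Eventually.and (Ioo_mem_nhdsLT hr) (hlim.eventually (lt_mem_nhds hlt))).exists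

noncomputable def profileFlux (k : ℕ) (v : ℝ → ℝ) (r : ℝ) : ℝ := r ^ k * sinOfSlope (v r)

namespace IsProfileSolOn

variable {k : ℕ} {α b c : ℝ} {φ v φ'' : ℝ → ℝ}

lemma hasDerivAt_profileFlux (hsol : IsProfileSolOn (k + 1) α b c (Ici 0) φ v φ'') {r : ℝ}
    (hr : 0 < r) :
    HasDerivAt (profileFlux k v) (r ^ k * oddPow (c / √(1 + v r ^ 2) - b) (1 / α)) r := by
  obtain ⟨-, -, -, hv', hode⟩ := hsol
  have hv : HasDerivAt v (φ'' r) r := (hv' r hr.le).hasDerivAt (Ici_mem_nhds hr)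
  refine ((hasDerivAt_pow k r).mul ((hasDerivAt_sinOfSlope (v r)).comp r hv)).congr_deriv ?_
  have hode := hode r hr.le hr.ne'
  simp only [Nat.cast_add, Nat.cast_one, add_sub_cancel_right] at hode
  have hk : (k : ℝ) * r ^ (k - 1) = k * r ^ k / r := by
    rcases k with _ | k
    · simp
    · rw [Nat.add_sub_cancel, pow_succ]
      field_simp
  rw [hk, Function.comp_apply, sinOfSlope]
  field_simp
  field_simp at hode
  linear_combination hode

lemma continuousOn_profileFlux (hsol : IsProfileSolOn (k + 1) α b c (Ici 0) φ v φ'') :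
    ContinuousOn (profileFlux k v) (Ici 0) :=
  (continuousOn_pow k).mul <| continuous_sinOfSlope.comp_continuousOn fun r hr =>
    (hsol.2.2.2.1 r hr).continuousWithinAt

lemma monotoneOn_profileFlux (hsol : IsProfileSolOn (k + 1) α 0 c (Ici 0) φ v φ'')
    (hc : 0 ≤ c) : MonotoneOn (profileFlux k v) (Ici 0) := by
  refine monotoneOn_of_hasDerivWithinAt_nonneg (convex_Ici 0) hsol.continuousOn_profileFlux
    (fun r hr => (hsol.hasDerivAt_profileFlux (by simpa using hr)).hasDerivWithinAt) fun r hr => ?_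
  rw [interior_Ici] at hr
  rw [sub_zero, oddPow_of_nonneg (by positivity)]
  exact mul_nonneg (pow_nonneg hr.out.le k) (by positivity)

lemma profileFlux_nonneg (hsol : IsProfileSolOn (k + 1) α 0 c (Ici 0) φ v φ'') (hc : 0 ≤ c)
    {r : ℝ} (hr : 0 ≤ r) : 0 ≤ profileFlux k v r := by
  have h := hsol.monotoneOn_profileFlux hc self_mem_Ici hr hr
  rwa [profileFlux, hsol.2.1, sinOfSlope_zero, mul_zero] at h

lemma sinOfSlope_nonneg (hsol : IsProfileSolOn (k + 1) α 0 c (Ici 0) φ v φ'') (hc : 0 ≤ c)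
    {r : ℝ} (hr : 0 < r) : 0 ≤ sinOfSlope (v r) :=
  (mul_nonneg_iff_of_pos_left (pow_pos hr k)).1 (hsol.profileFlux_nonneg hc hr.le)

lemma sinOfSlope_mul_pow_le (hsol : IsProfileSolOn (k + 1) α 0 c (Ici 0) φ v φ'') (hc : 0 ≤ c)
    {ρ x r : ℝ} (hρ : 0 < ρ) (hρx : ρ ≤ x) (hxr : x ≤ r) :
    sinOfSlope (v x) * ρ ^ k ≤ profileFlux k v r :=
  calc sinOfSlope (v x) * ρ ^ k
      ≤ sinOfSlope (v x) * x ^ k :=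
        mul_le_mul_of_nonneg_left (pow_le_pow_left₀ hρ.le hρx k)
          (hsol.sinOfSlope_nonneg hc (hρ.trans_le hρx))
    _ = profileFlux k v x := mul_comm _ _
    _ ≤ profileFlux k v r :=
        hsol.monotoneOn_profileFlux hc (mem_Ici.2 (hρ.le.trans hρx))
          (mem_Ici.2 (hρ.le.trans (hρx.trans hxr))) hxr

lemma pow_mul_rpow_mul_sub_le_profileFlux (hsol : IsProfileSolOn (k + 1) α 0 c (Ici 0) φ v φ'')
    (hα : 0 < α) (hc : 0 ≤ c) {ρ r S : ℝ} (hρ : 0 < ρ) (hρr : ρ < r)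
    (hS : ∀ x ∈ Icc ρ r, √(1 + v x ^ 2) ≤ S) :
    ρ ^ k * (c / S) ^ (1 / α) * (r - ρ) ≤ profileFlux k v r := by
  obtain ⟨ξ, hξ, hslope⟩ := exists_hasDerivAt_eq_slope (profileFlux k v) _ hρr
    (hsol.continuousOn_profileFlux.mono fun x hx => mem_Ici.2 (hρ.le.trans hx.1))
    fun x hx => hsol.hasDerivAt_profileFlux (hρ.trans hx.1)
  have hsξ : 0 < √(1 + v ξ ^ 2) := Real.sqrt_pos.2 (by positivity)
  have hderiv : ρ ^ k * (c / S) ^ (1 / α) ≤ ξ ^ k * (c / √(1 + v ξ ^ 2)) ^ (1 / α) := by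
    have hSξ := hS ξ (Ioo_subset_Icc_self hξ)
    have hS₀ : 0 < S := hsξ.trans_le hSξ
    gcongr
    · exact pow_nonneg (hρ.trans hξ.1).le k
    · exact hξ.1.le
  rw [sub_zero, oddPow_of_nonneg (by positivity)] at hslope
  rw [hslope, le_div_iff₀ (sub_pos.2 hρr)] at hderiv
  linarith [hsol.profileFlux_nonneg hc hρ.le]

end IsProfileSolOn

lemma exists_speed_bound_of_slope_le (k : ℕ) {α r₀ : ℝ} (hα : 0 < α) (hr₀ : 0 < r₀) (M : ℝ) :
    ∃ C, ∀ c φ v φ'', 0 ≤ c → IsProfileSolOn (k + 1) α 0 c (Ici 0) φ v φ'' → v r₀ ≤ M →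
      c ≤ C := by
  obtain ⟨ρ, ⟨hρ, hρr⟩, hρk⟩ := exists_mem_Ioo_mul_pow_lt_pow (sinOfSlope_lt_one M) hr₀ k
  set w := sinOfSlope M * r₀ ^ k / ρ ^ k
  have hw : w < 1 := (div_lt_one (pow_pos hρ k)).2 hρk
  set S := √((1 - w ^ 2)⁻¹)
  set D := r₀ ^ k / (ρ ^ k * (r₀ - ρ))
  refine ⟨S * D ^ α, fun c φ v φ'' hc hsol hM => ?_⟩
  have hflux : profileFlux k v r₀ ≤ sinOfSlope M * r₀ ^ k :=
    (mul_comm _ _).trans_le <|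
      mul_le_mul_of_nonneg_right (monotone_sinOfSlope hM) (pow_nonneg hr₀.le k)
  have hS : ∀ x ∈ Icc ρ r₀, √(1 + v x ^ 2) ≤ S := fun x hx => by
    refine Real.sqrt_le_sqrt (one_add_sq_le_of_sinOfSlope_le
      (hsol.sinOfSlope_nonneg hc (hρ.trans_le hx.1)) ?_ hw)
    rw [le_div_iff₀ (pow_pos hρ k)]
    exact (hsol.sinOfSlope_mul_pow_le hc hρ hx.1 hx.2).trans hflux
  have hS₀ : 0 < S := (Real.sqrt_pos.2 (by positivity)).trans_le (hS r₀ ⟨hρr.le, le_rfl⟩)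
  have hD : (c / S) ^ (1 / α) ≤ D := by
    rw [le_div_iff₀ (by nlinarith [pow_pos hρ k])]
    calc (c / S) ^ (1 / α) * (ρ ^ k * (r₀ - ρ)) = ρ ^ k * (c / S) ^ (1 / α) * (r₀ - ρ) := by
          ring
      _ ≤ profileFlux k v r₀ := hsol.pow_mul_rpow_mul_sub_le_profileFlux hα hc hρ hρr hS
      _ ≤ r₀ ^ k :=
          hflux.trans (mul_le_of_le_one_left (pow_nonneg hr₀.le k) (sinOfSlope_lt_one M).le)
  have hcS : c / S ≤ D ^ α := by
    calc c / S = ((c / S) ^ (1 / α)) ^ α := by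
          rw [one_div, Real.rpow_inv_rpow (by positivity) hα.ne']
      _ ≤ D ^ α := Real.rpow_le_rpow (by positivity) hD hα.le
  rwa [div_le_iff₀' hS₀] at hcS

/-- for `b = 0` and fixed `r₀ > 0`, the derivative `Φ'(r₀; c, 0)` of the
translating profile tends to `∞` as the speed `c → ∞`. -/
theorem stmt1 (N : ℕ) (hN : 1 < N) (α : ℝ) (hα : 0 < α) (r₀ : ℝ) (hr₀ : 0 < r₀)
    (P : ℝ → ℝ → ℝ)
    (hP : ∀ c : ℝ, 0 < c →
      ∃ φ φ'' : ℝ → ℝ, IsProfileSolOn N α 0 c (Set.Ici 0) φ (P c) φ'') :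
    Filter.Tendsto (fun c : ℝ => P c r₀) Filter.atTop Filter.atTop := by
  obtain ⟨k, rfl⟩ : ∃ k, N = k + 1 := ⟨N - 1, by omega⟩
  refine tendsto_atTop.2 fun M => ?_
  obtain ⟨C, hC⟩ := exists_speed_bound_of_slope_le k hα hr₀ M
  filter_upwards [eventually_gt_atTop C, eventually_gt_atTop 0] with c hcC hc
  obtain ⟨φ, φ'', hsol⟩ := hP c hc
  by_contra! hlt
  exact (hC c φ (P c) φ'' hc.le hsol hlt.le).not_gt hcC
end

section
/- Let N > 1 be an integer and α > 0. For b ≤ 0 fixed and 0 < c₁ < c₂, one has Φ'(r; c₁, b) < Φ'(r; c₂, b) and Φ(r; c₁, b) < Φ(r; c₂, b) for every r > 0 lying in both maximal existence intervals; likewise, for c > 0 fixed and b₂ < b₁ ≤ 0, one has Φ'(r; c, b₁) < Φ'(r; c, b₂) and Φ(r; c, b₁) < Φ(r; c, b₂) for every r > 0 lying in both maximal existence intervals (i.e. Φ and Φ' are strictly increasing in c and in −b). -/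
open Set Filter Topology

/-! For `b ≤ 0 < c` the right-hand side `G(p) = (c/√(1+p²) − b)^{1/α} √(1+p²)` is an
ordinary power, increasing in `c` and in `−b`. Letting `r → 0` in the equation and using
`φ'(r)/r → φ''(0)` gives `N φ''(0) = G(0)`, so the slopes of the two profiles separate at
once. Afterwards they cannot meet: at a first contact `φ₁'(r₀) = φ₂'(r₀) = p` the equation
gives `φ₂''(r₀) − φ₁''(r₀) = (G₂(p) − G₁(p))(1 + p²) > 0`. Integrating `φ₁' < φ₂'` gives
`φ₁ < φ₂`. -/

section Comparison

variable {f f' g g' : ℝ → ℝ} {a b : ℝ}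

theorem hasDerivAt_of_forall_hasDerivWithinAt_Ico
    (hf : ∀ x ∈ Ico a b, HasDerivWithinAt f (f' x) (Ico a b) x) {x : ℝ} (hx : x ∈ Ioo a b) :
    HasDerivAt f (f' x) x :=
  (hf x (Ioo_subset_Ico_self hx)).hasDerivAt (Ico_mem_nhds hx.1 hx.2)

theorem image_lt_of_deriv_lt_deriv_boundary
    (hf : ∀ x ∈ Ico a b, HasDerivWithinAt f (f' x) (Ico a b) x)
    (hg : ∀ x ∈ Ico a b, HasDerivWithinAt g (g' x) (Ico a b) x)
    (ha : f a = g a) (bound : ∀ x ∈ Ico a b, f x = g x → f' x < g' x) :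
    ∀ x ∈ Ioo a b, f x < g x := by
  have hle : ∀ y ∈ Ico a b, f y ≤ g y := by
    intro y hy
    have hsub : Icc a y ⊆ Ico a b := Icc_subset_Ico_right hy.2
    have hIco : ∀ x ∈ Ico a y, x ∈ Ico a b := fun x hx => ⟨hx.1, hx.2.trans hy.2⟩
    exact image_le_of_deriv_right_lt_deriv_boundary'
      (fun x hx => (hf x (hsub hx)).continuousWithinAt.mono hsub)
      (fun x hx => (hf x (hIco x hx)).mono_of_mem_nhdsWithin
        (Ico_mem_nhdsGE_of_mem (hIco x hx)))
      ha.le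
      (fun x hx => (hg x (hsub hx)).continuousWithinAt.mono hsub)
      (fun x hx => (hg x (hIco x hx)).mono_of_mem_nhdsWithin
        (Ico_mem_nhdsGE_of_mem (hIco x hx)))
      (fun x hx => bound x (hIco x hx)) ⟨hy.1, le_rfl⟩
  intro x hx
  refine (hle x (Ioo_subset_Ico_self hx)).lt_of_ne fun hfg => ?_
  have hx' : x ∈ Ico a b := Ioo_subset_Ico_self hx
  have hmin : IsLocalMin (g - f) x := by
    filter_upwards [Ico_mem_nhds hx.1 hx.2] with y hy
    simp only [Pi.sub_apply, hfg, sub_self, sub_nonneg]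
    exact hle y hy
  have hderiv : HasDerivAt (g - f) (g' x - f' x) x :=
    (hasDerivAt_of_forall_hasDerivWithinAt_Ico hg hx).sub
      (hasDerivAt_of_forall_hasDerivWithinAt_Ico hf hx)
  linarith [hmin.hasDerivAt_eq_zero hderiv, bound x hx' hfg]

theorem image_lt_of_deriv_lt
    (hf : ∀ x ∈ Ico a b, HasDerivWithinAt f (f' x) (Ico a b) x)
    (hg : ∀ x ∈ Ico a b, HasDerivWithinAt g (g' x) (Ico a b) x)
    (ha : f a = g a) (hlt : ∀ x ∈ Ioo a b, f' x < g' x) :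
    ∀ x ∈ Ioo a b, f x < g x := by
  have hmono : StrictMonoOn (g - f) (Ico a b) := by
    refine strictMonoOn_of_deriv_pos (convex_Ico a b)
      (fun x hx => ((hg x hx).sub (hf x hx)).continuousWithinAt) fun x hx => ?_
    rw [interior_Ico] at hx
    rw [((hasDerivAt_of_forall_hasDerivWithinAt_Ico hg hx).sub
      (hasDerivAt_of_forall_hasDerivWithinAt_Ico hf hx)).deriv]
    linarith [hlt x hx]
  intro x hx
  have := hmono ⟨le_rfl, hx.1.trans hx.2⟩ (Ioo_subset_Ico_self hx) hx.1
  simpa only [Pi.sub_apply, ha, sub_self, sub_pos] using this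

end Comparison

theorem HasDerivWithinAt.tendsto_div_nhdsGT_zero {f : ℝ → ℝ} {f' : ℝ} {s : Set ℝ}
    (h : HasDerivWithinAt f f' s 0) (hs : s ∈ 𝓝[>] 0) (h0 : f 0 = 0) :
    Tendsto (fun r => f r / r) (𝓝[>] 0) (𝓝 f') := by
  have := (hasDerivWithinAt_iff_tendsto_slope' (lt_irrefl 0)).mp (h.mono_of_mem_nhdsWithin hs)
  refine this.congr fun r => ?_
  simp [slope, h0, div_eq_inv_mul]

noncomputable def profileRHS (α b c p : ℝ) : ℝ :=
  oddPow (c / Real.sqrt (1 + p ^ 2) - b) (1 / α) * Real.sqrt (1 + p ^ 2)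

section ProfileRHS

variable {α b c : ℝ}

theorem profileRHS_base_pos (hb : b ≤ 0) (hc : 0 < c) (p : ℝ) :
    0 < c / Real.sqrt (1 + p ^ 2) - b := by
  have : 0 < c / Real.sqrt (1 + p ^ 2) := by positivity
  linarith

theorem profileRHS_eq_rpow (hb : b ≤ 0) (hc : 0 < c) (p : ℝ) :
    profileRHS α b c p = (c / Real.sqrt (1 + p ^ 2) - b) ^ (1 / α) * Real.sqrt (1 + p ^ 2) := by
  rw [profileRHS, oddPow, if_pos (profileRHS_base_pos hb hc p).le]

theorem continuous_profileRHS (hb : b ≤ 0) (hc : 0 < c) : Continuous (profileRHS α b c) := by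
  rw [funext (profileRHS_eq_rpow hb hc)]
  have hsqrt : Continuous fun p : ℝ => Real.sqrt (1 + p ^ 2) := by fun_prop
  exact ((continuous_const.div hsqrt fun p => by positivity).sub continuous_const
    |>.rpow_const fun p => Or.inl (profileRHS_base_pos hb hc p).ne').mul hsqrt

theorem profileRHS_lt_of_c_lt (hα : 0 < α) (hb : b ≤ 0) {c₁ c₂ : ℝ} (hc₁ : 0 < c₁)
    (hc : c₁ < c₂) (p : ℝ) : profileRHS α b c₁ p < profileRHS α b c₂ p := by
  rw [profileRHS_eq_rpow hb hc₁, profileRHS_eq_rpow hb (hc₁.trans hc)]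
  have := (profileRHS_base_pos hb hc₁ p).le
  gcongr

theorem profileRHS_lt_of_b_lt (hα : 0 < α) (hc : 0 < c) {b₁ b₂ : ℝ} (hb : b₂ < b₁)
    (hb₁ : b₁ ≤ 0) (p : ℝ) : profileRHS α b₁ c p < profileRHS α b₂ c p := by
  rw [profileRHS_eq_rpow hb₁ hc, profileRHS_eq_rpow (hb.le.trans hb₁) hc]
  have := (profileRHS_base_pos hb₁ hc p).le
  gcongr

end ProfileRHS

namespace IsProfileSolOn

variable {N : ℕ} {α b c R : ℝ} {φ φ' φ'' : ℝ → ℝ}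

theorem mono {J J' : Set ℝ} (sol : IsProfileSolOn N α b c J φ φ' φ'') (hJ : J' ⊆ J) :
    IsProfileSolOn N α b c J' φ φ' φ'' := by
  obtain ⟨hφ0, hφ'0, hφ, hφ', hode⟩ := sol
  exact ⟨hφ0, hφ'0, fun r hr => (hφ r (hJ hr)).mono hJ, fun r hr => (hφ' r (hJ hr)).mono hJ,
    fun r hr => hode r (hJ hr)⟩

theorem second_deriv_eq (sol : IsProfileSolOn N α b c (Ico 0 R) φ φ' φ'')
    {r : ℝ} (hr : r ∈ Ioo 0 R) :
    φ'' r = (profileRHS α b c (φ' r) - ((N : ℝ) - 1) / r * φ' r) * (1 + φ' r ^ 2) := by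
  have h := sol.2.2.2.2 r (Ioo_subset_Ico_self hr) hr.1.ne'
  rw [profileRHS, ← h, add_sub_cancel_right, div_mul_cancel₀ _ (by positivity)]

theorem mul_second_deriv_zero (hb : b ≤ 0) (hc : 0 < c) (hR : 0 < R)
    (sol : IsProfileSolOn N α b c (Ico 0 R) φ φ' φ'') :
    (N : ℝ) * φ'' 0 = profileRHS α b c 0 := by
  have hderiv₀ := sol.2.2.2.1 0 ⟨le_rfl, hR⟩
  have hslope : Tendsto (fun r => φ' r / r) (𝓝[>] 0) (𝓝 (φ'' 0)) :=
    hderiv₀.tendsto_div_nhdsGT_zero (Ico_mem_nhdsGT hR) sol.2.1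
  have hφ' : Tendsto φ' (𝓝[>] 0) (𝓝 0) := by
    have := hderiv₀.continuousWithinAt.tendsto.mono_left
      (nhdsWithin_le_of_mem (Ico_mem_nhdsGT hR))
    rwa [sol.2.1] at this
  set L := profileRHS α b c 0 - ((N : ℝ) - 1) * φ'' 0
  have hφ'' : Tendsto φ'' (𝓝[>] 0) (𝓝 L) := by
    have hG := ((continuous_profileRHS (α := α) hb hc).tendsto 0).comp hφ'
    have hsq : Tendsto (fun r => 1 + φ' r ^ 2) (𝓝[>] 0) (𝓝 1) := by
      simpa using tendsto_const_nhds.add (hφ'.pow 2)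
    have := (hG.sub (hslope.const_mul ((N : ℝ) - 1))).mul hsq
    rw [mul_one] at this
    refine this.congr' ?_
    filter_upwards [Ioo_mem_nhdsGT hR] with r hr
    rw [sol.second_deriv_eq hr, Function.comp_apply, mul_div_assoc', div_mul_eq_mul_div]
  have hderiv : HasDerivWithinAt φ' L (Ici 0) 0 := by
    refine hasDerivWithinAt_Ici_of_tendsto_deriv
      (fun x hx => (hasDerivAt_of_forall_hasDerivWithinAt_Ico sol.2.2.2.1
        hx).differentiableAt.differentiableWithinAt)
      (hderiv₀.continuousWithinAt.mono Ioo_subset_Ico_self) (Ioo_mem_nhdsGT hR) ?_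
    refine hφ''.congr' ?_
    filter_upwards [Ioo_mem_nhdsGT hR] with r hr
    exact (hasDerivAt_of_forall_hasDerivWithinAt_Ico sol.2.2.2.1 hr).deriv.symm
  have hL : φ'' 0 = L := tendsto_nhds_unique hslope <|
    (hderiv.mono Ico_subset_Ici_self).tendsto_div_nhdsGT_zero (Ico_mem_nhdsGT hR) sol.2.1
  linarith

variable {b₁ c₁ b₂ c₂ : ℝ} {φ₁ φ₁' φ₁'' φ₂ φ₂' φ₂'' : ℝ → ℝ}

theorem deriv_lt_of_profileRHS_lt (hb₁ : b₁ ≤ 0) (hc₁ : 0 < c₁) (hb₂ : b₂ ≤ 0)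
    (hc₂ : 0 < c₂) (hG : ∀ p, profileRHS α b₁ c₁ p < profileRHS α b₂ c₂ p) (hR : 0 < R)
    (sol₁ : IsProfileSolOn N α b₁ c₁ (Ico 0 R) φ₁ φ₁' φ₁'')
    (sol₂ : IsProfileSolOn N α b₂ c₂ (Ico 0 R) φ₂ φ₂' φ₂'') :
    ∀ r ∈ Ioo 0 R, φ₁' r < φ₂' r := by
  refine image_lt_of_deriv_lt_deriv_boundary sol₁.2.2.2.1 sol₂.2.2.2.1
    (sol₁.2.1.trans sol₂.2.1.symm) fun r hr heq => ?_
  rcases hr.1.eq_or_lt with rfl | hr₀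
  · refine lt_of_mul_lt_mul_left (a := (N : ℝ)) ?_ N.cast_nonneg
    rw [mul_second_deriv_zero hb₁ hc₁ hR sol₁, mul_second_deriv_zero hb₂ hc₂ hR sol₂]
    exact hG 0
  · rw [sol₁.second_deriv_eq ⟨hr₀, hr.2⟩, sol₂.second_deriv_eq ⟨hr₀, hr.2⟩, heq]
    gcongr
    exact hG _

theorem lt_of_profileRHS_lt {R₁ R₂ : ℝ} (hb₁ : b₁ ≤ 0) (hc₁ : 0 < c₁) (hb₂ : b₂ ≤ 0)
    (hc₂ : 0 < c₂) (hG : ∀ p, profileRHS α b₁ c₁ p < profileRHS α b₂ c₂ p)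
    (sol₁ : IsProfileSolOn N α b₁ c₁ (Ico 0 R₁) φ₁ φ₁' φ₁'')
    (sol₂ : IsProfileSolOn N α b₂ c₂ (Ico 0 R₂) φ₂ φ₂' φ₂'')
    {r : ℝ} (hr : 0 < r) (hr₁ : r < R₁) (hr₂ : r < R₂) :
    φ₁' r < φ₂' r ∧ φ₁ r < φ₂ r := by
  have sol₁' := sol₁.mono (Ico_subset_Ico_right (min_le_left R₁ R₂))
  have sol₂' := sol₂.mono (Ico_subset_Ico_right (min_le_right R₁ R₂))
  have hr' : r ∈ Ioo 0 (min R₁ R₂) := ⟨hr, lt_min hr₁ hr₂⟩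
  have hslope :=
    deriv_lt_of_profileRHS_lt hb₁ hc₁ hb₂ hc₂ hG (hr.trans hr'.2) sol₁' sol₂'
  exact ⟨hslope r hr', image_lt_of_deriv_lt sol₁'.2.2.1 sol₂'.2.2.1
    (sol₁.1.trans sol₂.1.symm) hslope r hr'⟩

end IsProfileSolOn

theorem stmt5_general (N : ℕ) (α : ℝ) (hα : 0 < α) :
    (∀ (b c₁ c₂ R₁ R₂ : ℝ) (φ₁ φ₁' φ₁'' φ₂ φ₂' φ₂'' : ℝ → ℝ),
      b ≤ 0 → 0 < c₁ → c₁ < c₂ →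
      IsMaxProfileSol N α b c₁ R₁ φ₁ φ₁' φ₁'' →
      IsMaxProfileSol N α b c₂ R₂ φ₂ φ₂' φ₂'' →
      ∀ r : ℝ, 0 < r → r < R₁ → r < R₂ → φ₁' r < φ₂' r ∧ φ₁ r < φ₂ r) ∧
    (∀ (c b₁ b₂ R₁ R₂ : ℝ) (φ₁ φ₁' φ₁'' φ₂ φ₂' φ₂'' : ℝ → ℝ),
      0 < c → b₂ < b₁ → b₁ ≤ 0 →
      IsMaxProfileSol N α b₁ c R₁ φ₁ φ₁' φ₁'' →
      IsMaxProfileSol N α b₂ c R₂ φ₂ φ₂' φ₂'' →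
      ∀ r : ℝ, 0 < r → r < R₁ → r < R₂ → φ₁' r < φ₂' r ∧ φ₁ r < φ₂ r) := by
  refine ⟨fun b c₁ c₂ R₁ R₂ _ _ _ _ _ _ hb hc₁ hc sol₁ sol₂ r hr hr₁ hr₂ => ?_,
    fun c b₁ b₂ R₁ R₂ _ _ _ _ _ _ hc hb hb₁ sol₁ sol₂ r hr hr₁ hr₂ => ?_⟩
  · exact IsProfileSolOn.lt_of_profileRHS_lt hb hc₁ hb (hc₁.trans hc)
      (profileRHS_lt_of_c_lt hα hb hc₁ hc) sol₁.2.1 sol₂.2.1 hr hr₁ hr₂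
  · exact IsProfileSolOn.lt_of_profileRHS_lt hb₁ hc (hb.le.trans hb₁) hc
      (profileRHS_lt_of_b_lt hα hc hb hb₁) sol₁.2.1 sol₂.2.1 hr hr₁ hr₂

/-- for `b ≤ 0`, both `Φ(r; c, b)` and `Φ'(r; c, b)` are strictly
increasing in `c` and in `−b`, at every `r > 0` in both maximal existence intervals. -/
theorem stmt5 (N : ℕ) (hN : 1 < N) (α : ℝ) (hα : 0 < α) :
    (∀ (b c₁ c₂ R₁ R₂ : ℝ) (φ₁ φ₁' φ₁'' φ₂ φ₂' φ₂'' : ℝ → ℝ),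
      b ≤ 0 → 0 < c₁ → c₁ < c₂ →
      IsMaxProfileSol N α b c₁ R₁ φ₁ φ₁' φ₁'' →
      IsMaxProfileSol N α b c₂ R₂ φ₂ φ₂' φ₂'' →
      ∀ r : ℝ, 0 < r → r < R₁ → r < R₂ → φ₁' r < φ₂' r ∧ φ₁ r < φ₂ r) ∧
    (∀ (c b₁ b₂ R₁ R₂ : ℝ) (φ₁ φ₁' φ₁'' φ₂ φ₂' φ₂'' : ℝ → ℝ),
      0 < c → b₂ < b₁ → b₁ ≤ 0 →
      IsMaxProfileSol N α b₁ c R₁ φ₁ φ₁' φ₁'' →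
      IsMaxProfileSol N α b₂ c R₂ φ₂ φ₂' φ₂'' →
      ∀ r : ℝ, 0 < r → r < R₁ → r < R₂ → φ₁' r < φ₂' r ∧ φ₁ r < φ₂ r) :=
  stmt5_general N α hα
end

section
/- Let N > 1 be an integer, 0 < α ≤ 1 and c > b > 0, and set Ψ₀ := √(c²−b²)/b. Then the translating profile Φ(·; c, b) (defined on [0, ∞)) satisfies |Φ(r) − Ψ₀·r| → ∞ as r → ∞; in fact Ψ₀·r − Φ(r) → ∞ as r → ∞. -/
/-!
Write `Ψ = √(c² − b²)/b`, the slope at which the source term `(c/√(1+u²) − b)^{1/α}` of the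
equation vanishes. For small `M > 0` the curve `u = Ψ − M/(r+1)` is an upper barrier for `Φ'`:
where `Φ'` touches it, the source term is `O((1/(r+1))^{1/α}) = O(1/(r+1))` because `α ≤ 1`,
while the drift term `((N−1)/r)·Φ'` is of exact order `1/r`, so `Φ'' < 0` there although the
barrier increases. Integrating `Φ' ≤ Ψ − M/(r+1)` from `Φ(0) = 0` gives
`Ψ r − Φ(r) ≥ M log(r+1) → ∞`.
-/

open Set Filter Topology

section Comparison

variable {f f' B B' : ℝ → ℝ} {a : ℝ}

theorem image_le_of_deriv_lt_deriv_boundary_Ici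
    (hf : ∀ x ∈ Ici a, HasDerivWithinAt f (f' x) (Ici a) x) (ha : f a ≤ B a)
    (hB : ∀ x ∈ Ici a, HasDerivAt B (B' x) x) (bound : ∀ x ∈ Ici a, f x = B x → f' x < B' x) :
    ∀ x ∈ Ici a, f x ≤ B x := fun _ hx =>
  image_le_of_deriv_right_lt_deriv_boundary'
    (fun y hy => (hf y hy.1).continuousWithinAt.mono Icc_subset_Ici_self)
    (fun y hy => (hf y hy.1).mono (Ici_subset_Ici.2 hy.1)) ha
    (fun y hy => (hB y hy.1).continuousAt.continuousWithinAt)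
    (fun y hy => (hB y hy.1).hasDerivWithinAt) (fun y hy => bound y hy.1) ⟨hx, le_rfl⟩

theorem image_le_of_deriv_le_deriv_boundary_Ici
    (hf : ∀ x ∈ Ici a, HasDerivWithinAt f (f' x) (Ici a) x) (ha : f a ≤ B a)
    (hB : ∀ x ∈ Ici a, HasDerivAt B (B' x) x) (bound : ∀ x ∈ Ici a, f' x ≤ B' x) :
    ∀ x ∈ Ici a, f x ≤ B x := fun _ hx =>
  image_le_of_deriv_right_le_deriv_boundary
    (fun y hy => (hf y hy.1).continuousWithinAt.mono Icc_subset_Ici_self)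
    (fun y hy => (hf y hy.1).mono (Ici_subset_Ici.2 hy.1)) ha
    (fun y hy => (hB y hy.1).continuousAt.continuousWithinAt)
    (fun y hy => (hB y hy.1).hasDerivWithinAt) (fun y hy => bound y hy.1) ⟨hx, le_rfl⟩

end Comparison

theorem oddPow_le_rpow {x y e : ℝ} (hxy : x ≤ y) (hy : 0 ≤ y) (he : 0 ≤ e) :
    oddPow x e ≤ y ^ e := by
  unfold oddPow
  split_ifs with hx
  · exact Real.rpow_le_rpow hx hxy he
  · exact (neg_nonpos.2 (Real.rpow_nonneg (by linarith) e)).trans (Real.rpow_nonneg hy e)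

theorem rpow_div_le_rpow_div {y t p : ℝ} (hy : 0 ≤ y) (ht : 1 ≤ t) (hp : 1 ≤ p) :
    (y / t) ^ p ≤ y ^ p / t := by
  rw [Real.div_rpow hy (by linarith)]
  exact div_le_div_of_nonneg_left (Real.rpow_nonneg hy p) (by linarith)
    (Real.self_le_rpow_of_one_le ht hp)

theorem exists_pos_le_rpow_mul_lt {b p C m ε : ℝ} (hp : 0 < p) (hm : 0 < m) (hε : 0 < ε) :
    ∃ M, 0 < M ∧ M ≤ m ∧ (b * M) ^ p * C < ε := by
  have hcont : Continuous fun M : ℝ => (b * M) ^ p * C :=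
    ((Real.continuous_rpow_const hp.le).comp (continuous_const.mul continuous_id)).mul
      continuous_const
  have hsmall : ∀ᶠ M in 𝓝[>] 0, (b * M) ^ p * C < ε := by
    refine (hcont.tendsto 0).eventually (gt_mem_nhds ?_) |>.filter_mono nhdsWithin_le_nhds
    simp [Real.zero_rpow hp.ne', hε]
  obtain ⟨M, ⟨hM0, hMm⟩, hMε⟩ := (Eventually.and (Ioc_mem_nhdsGT hm) hsmall).exists
  exact ⟨M, hM0, hMm, hMε⟩

theorem sqrt_one_add_sq_sub_le {u v : ℝ} (hu : 0 ≤ u) (huv : u ≤ v) :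
    √(1 + v ^ 2) - √(1 + u ^ 2) ≤ v - u := by
  have hsu := Real.sq_sqrt (by positivity : (0 : ℝ) ≤ 1 + u ^ 2)
  have hsv := Real.sq_sqrt (by positivity : (0 : ℝ) ≤ 1 + v ^ 2)
  have hu' : u ≤ √(1 + u ^ 2) := Real.le_sqrt_of_sq_le (by linarith)
  have hv' : v ≤ √(1 + v ^ 2) := Real.le_sqrt_of_sq_le (by linarith)
  nlinarith [Real.sqrt_nonneg (1 + u ^ 2), Real.sqrt_nonneg (1 + v ^ 2)]

theorem sqrt_one_add_sq_sqrt_sq_sub_sq_div {b c : ℝ} (hb : 0 < b) (hbc : b ≤ c) :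
    √(1 + (√(c ^ 2 - b ^ 2) / b) ^ 2) = c / b := by
  rw [div_pow, Real.sq_sqrt (by nlinarith), ← Real.sqrt_sq (div_pos (hb.trans_le hbc) hb).le]
  congr 1
  field_simp
  ring

noncomputable def profileSource (α b c u : ℝ) : ℝ :=
  oddPow (c / √(1 + u ^ 2) - b) (1 / α) * √(1 + u ^ 2)

theorem profileSource_le {α b c u : ℝ} (hα : 0 < α) (hb : 0 < b) (hbc : b ≤ c) (hu : 0 ≤ u)
    (huΨ : u ≤ √(c ^ 2 - b ^ 2) / b) :
    profileSource α b c u ≤ (b * (√(c ^ 2 - b ^ 2) / b - u)) ^ (1 / α) * (c / b) := by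
  set Ψ := √(c ^ 2 - b ^ 2) / b
  set s := √(1 + u ^ 2)
  have hs1 : 1 ≤ s := Real.le_sqrt_of_sq_le (by nlinarith)
  have hsc : s ≤ c / b :=
    sqrt_one_add_sq_sqrt_sq_sub_sq_div hb hbc ▸ Real.sqrt_le_sqrt (by gcongr)
  have hsΨ : c / b - s ≤ Ψ - u :=
    sqrt_one_add_sq_sqrt_sq_sub_sq_div hb hbc ▸ sqrt_one_add_sq_sub_le hu huΨ
  have hbase : c / s - b ≤ b * (Ψ - u) := calc
    c / s - b = b * (c / b - s) / s := by field_simp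
    _ ≤ b * (c / b - s) := div_le_self (mul_nonneg hb.le (by linarith)) hs1
    _ ≤ b * (Ψ - u) := by gcongr
  exact mul_le_mul (oddPow_le_rpow hbase (by nlinarith) (by positivity)) (by linarith)
    (by positivity) (by positivity)

namespace IsProfileSolOn

variable {N : ℕ} {α b c : ℝ} {J : Set ℝ} {φ φ' φ'' : ℝ → ℝ}

theorem deriv2_eq (hφ : IsProfileSolOn N α b c J φ φ' φ'') {r : ℝ} (hrJ : r ∈ J) (hr : r ≠ 0) :
    φ'' r = (1 + φ' r ^ 2) * (profileSource α b c (φ' r) - ((N : ℝ) - 1) / r * φ' r) := by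
  have h := hφ.2.2.2.2 r hrJ hr
  rw [profileSource, ← h]
  field_simp
  ring

theorem deriv2_neg_of_eq_barrier (hφ : IsProfileSolOn N α b c J φ φ' φ'') (hN : 1 < N)
    (hα0 : 0 < α) (hα1 : α ≤ 1) (hb : 0 < b) (hbc : b ≤ c) {M : ℝ} (hM : 0 < M)
    (hMΨ : M ≤ √(c ^ 2 - b ^ 2) / b / 2)
    (hMsmall : (b * M) ^ (1 / α) * (c / b) < ((N : ℝ) - 1) * (√(c ^ 2 - b ^ 2) / b) / 2)
    {r : ℝ} (hrJ : r ∈ J) (hr : 0 < r) (heq : φ' r = √(c ^ 2 - b ^ 2) / b - M / (r + 1)) :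
    φ'' r < 0 := by
  set Ψ := √(c ^ 2 - b ^ 2) / b
  have hN1 : (0 : ℝ) < N - 1 := sub_pos.2 (by exact_mod_cast hN)
  have hδ : M / (r + 1) ≤ M := div_le_self hM.le (by linarith)
  have hδ0 : 0 ≤ M / (r + 1) := by positivity
  have hsource : profileSource α b c (φ' r) < ((N : ℝ) - 1) * Ψ / 2 / (r + 1) := calc
    profileSource α b c (φ' r) ≤ (b * (Ψ - φ' r)) ^ (1 / α) * (c / b) :=
      profileSource_le hα0 hb hbc (by linarith) (by linarith)
    _ = (b * M / (r + 1)) ^ (1 / α) * (c / b) := by rw [heq, sub_sub_cancel, mul_div_assoc]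
    _ ≤ (b * M) ^ (1 / α) / (r + 1) * (c / b) := mul_le_mul_of_nonneg_right
      (rpow_div_le_rpow_div (by positivity) (by linarith) (one_le_one_div hα0 hα1))
      (div_nonneg (hb.le.trans hbc) hb.le)
    _ = (b * M) ^ (1 / α) * (c / b) / (r + 1) := by ring
    _ < ((N : ℝ) - 1) * Ψ / 2 / (r + 1) := by gcongr
  have hdrift : ((N : ℝ) - 1) * Ψ / 2 / (r + 1) < ((N : ℝ) - 1) / r * φ' r := calc
    ((N : ℝ) - 1) * Ψ / 2 / (r + 1) < ((N : ℝ) - 1) * Ψ / 2 / r := by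
      have : 0 < Ψ := by linarith
      gcongr
      linarith
    _ = ((N : ℝ) - 1) / r * (Ψ / 2) := by ring
    _ ≤ ((N : ℝ) - 1) / r * φ' r := by gcongr; linarith
  rw [hφ.deriv2_eq hrJ hr.ne']
  exact mul_neg_of_pos_of_neg (by positivity) (by linarith)

theorem deriv_le_barrier (hφ : IsProfileSolOn N α b c (Ici 0) φ φ' φ'') (hN : 1 < N)
    (hα0 : 0 < α) (hα1 : α ≤ 1) (hb : 0 < b) (hbc : b ≤ c) {M : ℝ} (hM : 0 < M)
    (hMΨ : M ≤ √(c ^ 2 - b ^ 2) / b / 2)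
    (hMsmall : (b * M) ^ (1 / α) * (c / b) < ((N : ℝ) - 1) * (√(c ^ 2 - b ^ 2) / b) / 2) :
    ∀ r ∈ Ici (0 : ℝ), φ' r ≤ √(c ^ 2 - b ^ 2) / b - M / (r + 1) := by
  set Ψ := √(c ^ 2 - b ^ 2) / b
  obtain ⟨-, hφ'0, -, hφ'', -⟩ := id hφ
  refine image_le_of_deriv_lt_deriv_boundary_Ici (B' := fun r => M / (r + 1) ^ 2) hφ''
    (by rw [hφ'0]; linarith [div_one M]) (fun r hr => ?_) (fun r hr heq => ?_)
  · have hr1 : r + 1 ≠ 0 := by rw [mem_Ici] at hr; linarith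
    exact (((hasDerivAt_const r M).div ((hasDerivAt_id' r).add_const 1) hr1).const_sub
      Ψ).congr_deriv (by ring)
  · rcases (mem_Ici.1 hr).eq_or_lt with rfl | hr
    · rw [hφ'0, zero_add, div_one] at heq
      linarith
    · exact (hφ.deriv2_neg_of_eq_barrier hN hα0 hα1 hb hbc hM hMΨ hMsmall hr.le hr
        heq).trans (by positivity)

theorem le_mul_sub_mul_log (hφ : IsProfileSolOn N α b c (Ici 0) φ φ' φ'') {Ψ M : ℝ}
    (hφ' : ∀ r ∈ Ici (0 : ℝ), φ' r ≤ Ψ - M / (r + 1)) :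
    ∀ r ∈ Ici (0 : ℝ), φ r ≤ Ψ * r - M * Real.log (r + 1) := by
  obtain ⟨hφ0, -, hφd, -, -⟩ := hφ
  refine image_le_of_deriv_le_deriv_boundary_Ici (B' := fun r => Ψ - M / (r + 1)) hφd
    (by simp [hφ0]) (fun r hr => ?_) hφ'
  have hr1 : r + 1 ≠ 0 := by rw [mem_Ici] at hr; linarith
  exact (((hasDerivAt_id' r).const_mul Ψ).sub
    ((((hasDerivAt_id' r).add_const 1).log hr1).const_mul M)).congr_deriv (by ring)

end IsProfileSolOn

/-- for `0 < α ≤ 1` and `c > b > 0`, with `Ψ₀ = √(c²−b²)/b`, the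
translating profile satisfies `|Φ(r) − Ψ₀ r| → ∞`; in fact `Ψ₀ r − Φ(r) → ∞`. -/
theorem stmt9 (N : ℕ) (hN : 1 < N) (α b c : ℝ) (hα0 : 0 < α) (hα1 : α ≤ 1)
    (hb : 0 < b) (hc : b < c) (φ φ' φ'' : ℝ → ℝ)
    (hφ : IsProfileSolOn N α b c (Set.Ici 0) φ φ' φ'') :
    Filter.Tendsto (fun r : ℝ => |φ r - Real.sqrt (c ^ 2 - b ^ 2) / b * r|)
      Filter.atTop Filter.atTop ∧
    Filter.Tendsto (fun r : ℝ => Real.sqrt (c ^ 2 - b ^ 2) / b * r - φ r)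
      Filter.atTop Filter.atTop := by
  set Ψ := √(c ^ 2 - b ^ 2) / b
  have hΨ : 0 < Ψ := div_pos (Real.sqrt_pos.2 (by nlinarith)) hb
  have hN1 : (0 : ℝ) < N - 1 := sub_pos.2 (by exact_mod_cast hN)
  obtain ⟨M, hM, hMΨ, hMsmall⟩ := exists_pos_le_rpow_mul_lt (b := b) (C := c / b)
    (one_div_pos.2 hα0) (half_pos hΨ) (by positivity : 0 < ((N : ℝ) - 1) * Ψ / 2)
  have hlog := hφ.le_mul_sub_mul_log (hφ.deriv_le_barrier hN hα0 hα1 hb hc.le hM hMΨ hMsmall)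
  have hgap : Tendsto (fun r => Ψ * r - φ r) atTop atTop := by
    refine tendsto_atTop_mono' atTop ?_ ((Real.tendsto_log_atTop.comp
      (tendsto_atTop_add_const_right _ 1 tendsto_id)).const_mul_atTop hM)
    filter_upwards [eventually_ge_atTop 0] with r hr
    have := hlog r hr
    simp only [Function.comp_apply, id]
    linarith
  refine ⟨tendsto_atTop_mono (fun r => ?_) hgap, hgap⟩
  rw [abs_sub_comm]
  exact le_abs_self _
end
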